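/- A discrete Q[G]-module M over a t.d.l.c. group G is projective in the category of discrete Q[G]-modules if and only if M is a direct summand of a permutation module Q[Ω] for some discrete left G-set Ω with compact open stabilizers. -/

import Mathlib

/-!
An equivariant map out of `ℚ[Ω]` is a `G`-map out of `Ω`, so it is determined by its values at
orbit representatives `ω`, which only have to be fixed by the stabilizer of `ω`. When that
stabilizer `U` is compact, a `U`-fixed vector of `A` lifts along a surjection `B → A` of discrete
modules to a `U`-fixed vector of `B`: average an arbitrary preimage over its `U`-orbit, which is
finite because stabilizers in `B` are open. Hence `ℚ[Ω]` is projective, and so are its summands.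

Conversely, van Dantzig's theorem gives a compact open subgroup `K ≤ G`. Each `m ∈ M` is the
image of the trivial coset under the orbit map `G ⧸ (Stab m ⊓ K) → M`, so `M` is an equivariant
quotient of `ℚ[∐ₘ G ⧸ (Stab m ⊓ K)]`, and projectivity of `M` splits this quotient.
-/

universe u

/-- A discrete `ℚ[G]`-module over a topological group `G`: a `ℚ`-vector space with
a `ℚ`-linear `G`-action in which every element has open stabilizer. -/
structure DiscGMod (G : Type u) [Group G] [TopologicalSpace G] : Type (u + 1) where
  carrier : Type u
  [acg : AddCommGroup carrier]
  [mod : Module ℚ carrier]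
  [act : DistribMulAction G carrier]
  [cmm : SMulCommClass G ℚ carrier]
  discrete : ∀ m : carrier, IsOpen ((MulAction.stabilizer G m : Subgroup G) : Set G)

attribute [instance] DiscGMod.acg DiscGMod.mod DiscGMod.act DiscGMod.cmm

/-- A morphism of discrete `ℚ[G]`-modules is a `G`-equivariant `ℚ`-linear map. -/
def DiscGMod.Equivariant {G : Type u} [Group G] [TopologicalSpace G]
    {A B : DiscGMod G} (f : A.carrier →ₗ[ℚ] B.carrier) : Prop :=
  ∀ (g : G) (a : A.carrier), f (g • a) = g • f a

/-- Projectivity, relative to the category of discrete `ℚ[G]`-modules, of a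
`ℚ`-module `P` equipped with a `G`-action `σ`: every equivariant map from `P` to a
discrete module lifts along every equivariant surjection of discrete modules. -/
def ProjOverDiscrete (G : Type u) [Group G] [TopologicalSpace G]
    (P : Type u) [AddCommGroup P] [Module ℚ P] (σ : G → P → P) : Prop :=
  ∀ (A B : DiscGMod G) (π : B.carrier →ₗ[ℚ] A.carrier),
    DiscGMod.Equivariant π → Function.Surjective π →
    ∀ φ : P →ₗ[ℚ] A.carrier, (∀ (g : G) (x : P), φ (σ g x) = g • φ x) →
    ∃ ψ : P →ₗ[ℚ] B.carrier, (∀ (g : G) (x : P), ψ (σ g x) = g • ψ x) ∧ π.comp ψ = φ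

open MulAction Finsupp Pointwise

theorem exists_isOpen_isCompact_subgroup (G : Type*) [Group G] [TopologicalSpace G]
    [IsTopologicalGroup G] [TotallyDisconnectedSpace G] [LocallyCompactSpace G] :
    ∃ K : Subgroup G, IsOpen (K : Set G) ∧ IsCompact (K : Set G) := by
  obtain ⟨W, hWc, hW1⟩ := exists_compact_mem_nhds (1 : G)
  obtain ⟨V, hVclopen, h1V, hVW⟩ := loc_compact_Haus_tot_disc_of_zero_dim.mem_nhds_iff.mp hW1
  have hVc : IsCompact V := hWc.of_isClosed_subset hVclopen.isClosed hVW
  obtain ⟨T, hT, hTV⟩ := compact_open_separated_mul_left hVc hVclopen.isOpen subset_rfl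
  have hstab_sub : (stabilizer G V : Set G) ⊆ V := fun g (hg : g • V = V) => by
    simpa only [hg, smul_eq_mul, mul_one] using Set.smul_mem_smul_set (a := g) h1V
  have hstab_open : IsOpen (stabilizer G V : Set G) := by
    refine Subgroup.isOpen_of_mem_nhds _ (g := 1) <|
      Filter.mem_of_superset (Filter.inter_mem hT (inv_mem_nhds_one G hT)) ?_
    rintro g ⟨hg, hg'⟩
    have hsub : ∀ h ∈ T, h • V ⊆ V := fun h hh => (Set.smul_set_subset_mul hh).trans hTV
    exact (hsub g hg).antisymm (Set.subset_smul_set_iff.mpr (hsub g⁻¹ hg'))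
  exact ⟨stabilizer G V, hstab_open,
    hVc.of_isClosed_subset ((stabilizer G V).isClosed_of_isOpen hstab_open) hstab_sub⟩

theorem linearCombination_mapDomain_smul {R G Ω V : Type*} [Semiring R] [Monoid G]
    [MulAction G Ω] [AddCommMonoid V] [Module R V] [DistribMulAction G V] [SMulCommClass G R V]
    (F : Ω → V) (hF : ∀ (g : G) (ω : Ω), F (g • ω) = g • F ω) (g : G) (l : Ω →₀ R) :
    linearCombination R F (l.mapDomain (g • ·)) = g • linearCombination R F l := by
  rw [linearCombination_mapDomain, ← DistribSMul.toLinearMap_apply R V g,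
    apply_linearCombination]
  exact congrArg (linearCombination R · l) (funext (hF g))

theorem exists_equivariant_lift_of_stabilizer_le {G Ω X Y : Type*} [Group G] [MulAction G Ω]
    [MulAction G X] [MulAction G Y] (π : Y → X) (hπ : ∀ (g : G) (y : Y), π (g • y) = g • π y)
    (f : Ω → X) (hf : ∀ (g : G) (ω : Ω), f (g • ω) = g • f ω)
    (hlift : ∀ ω, ∃ y, π y = f ω ∧ stabilizer G ω ≤ stabilizer G y) :
    ∃ F : Ω → Y, (∀ (g : G) (ω : Ω), F (g • ω) = g • F ω) ∧ π ∘ F = f := by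
  choose y hπy hy using hlift
  let r : Ω → Ω := fun ω => (Quotient.mk (orbitRel G Ω) ω).out
  have hr_smul (g : G) (ω : Ω) : r (g • ω) = r ω :=
    congrArg Quotient.out (Quotient.sound (s := orbitRel G Ω) (mem_orbit ω g))
  have hr (ω : Ω) : ∃ g : G, g • r ω = ω := (orbitRel G Ω).symm' (Quotient.mk_out ω)
  choose γ hγ using hr
  refine ⟨fun ω => γ ω • y (r ω), fun g ω => ?_, funext fun ω => ?_⟩
  · have hfix : (γ (g • ω))⁻¹ * g * γ ω ∈ stabilizer G (r ω) := by
      rw [mem_stabilizer_iff, mul_smul, mul_smul, hγ, inv_smul_eq_iff, ← hr_smul g ω, hγ]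
    calc γ (g • ω) • y (r (g • ω))
        = γ (g • ω) • ((γ (g • ω))⁻¹ * g * γ ω) • y (r ω) := by rw [hr_smul, hy _ hfix]
      _ = g • γ ω • y (r ω) := by rw [smul_smul, smul_smul, mul_assoc, mul_inv_cancel_left]
  · simp only [Function.comp_apply, hπ, hπy, ← hf, hγ]

theorem ProjOverDiscrete.of_retract {G : Type u} [Group G] [TopologicalSpace G] {P Q : Type u}
    [AddCommGroup P] [Module ℚ P] [AddCommGroup Q] [Module ℚ Q] {σ : G → P → P}
    {τ : G → Q → Q} (hP : ProjOverDiscrete G P σ) (i : Q →ₗ[ℚ] P) (p : P →ₗ[ℚ] Q)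
    (hi : ∀ g q, i (τ g q) = σ g (i q)) (hp : ∀ g x, p (σ g x) = τ g (p x))
    (hpi : p.comp i = LinearMap.id) : ProjOverDiscrete G Q τ := by
  intro A B π hπ hsurj φ hφ
  obtain ⟨ψ, hψ, hπψ⟩ := hP A B π hπ hsurj (φ.comp p) fun g x => by simp [hp, hφ]
  refine ⟨ψ.comp i, fun g q => by simp [hi, hψ], ?_⟩
  rw [← LinearMap.comp_assoc, hπψ, LinearMap.comp_assoc, hpi, LinearMap.comp_id]

theorem stabilizer_sigma_mk {G ι : Type*} [Group G] {α : ι → Type*} [∀ i, MulAction G (α i)]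
    (i : ι) (x : α i) : stabilizer G (⟨i, x⟩ : Σ i, α i) = stabilizer G x := by
  ext g
  simp [mem_stabilizer_iff, Sigma.smul_mk]

section Discrete

variable {G : Type u} [Group G] [TopologicalSpace G] [IsTopologicalGroup G]

theorem exists_lift_stabilizer_le_of_isCompact {A : Type*} [AddCommGroup A] [Module ℚ A]
    [MulAction G A] (B : DiscGMod G) (π : B.carrier →ₗ[ℚ] A)
    (hπ : ∀ (g : G) (b : B.carrier), π (g • b) = g • π b) (hsurj : Function.Surjective π)
    {U : Subgroup G} (hU : IsCompact (U : Set G)) {a : A} (ha : U ≤ stabilizer G a) :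
    ∃ b, π b = a ∧ U ≤ stabilizer G b := by
  obtain ⟨b₀, rfl⟩ := hsurj a
  -- With the discrete topology on `B` the action is continuous, so the compact orbit is finite.
  have hfin : ((· • b₀) '' (U : Set G)).Finite := by
    let _ : TopologicalSpace B.carrier := ⊥
    have _ : DiscreteTopology B.carrier := ⟨rfl⟩
    have _ : ContinuousSMul G B.carrier := continuousSMul_iff_stabilizer_isOpen.mpr B.discrete
    exact (hU.image (continuous_id.smul continuous_const)).finite_of_discrete
  set S := hfin.toFinset
  have hπS : ∀ x ∈ S, π x = π b₀ := by
    simp only [S, Set.Finite.mem_toFinset, Set.mem_image]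
    rintro _ ⟨u, hu, rfl⟩
    rw [hπ, ha hu]
  have hUS : ∀ u ∈ U, ∀ x, x ∈ S ↔ u • x ∈ S := by
    simp only [S, Set.Finite.mem_toFinset, Set.mem_image]
    refine fun u hu x => ⟨?_, ?_⟩
    · rintro ⟨v, hv, rfl⟩
      exact ⟨u * v, U.mul_mem hu hv, mul_smul u v b₀⟩
    · rintro ⟨v, hv, hvx⟩
      exact ⟨u⁻¹ * v, U.mul_mem (U.inv_mem hu) hv, by rw [mul_smul, hvx, inv_smul_smul]⟩
  have hcard : (S.card : ℚ) ≠ 0 := Nat.cast_ne_zero.mpr <| Finset.card_ne_zero_of_mem <|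
    hfin.mem_toFinset.mpr ⟨1, U.one_mem, one_smul G b₀⟩
  refine ⟨(S.card : ℚ)⁻¹ • ∑ x ∈ S, x, ?_, fun u hu => ?_⟩
  · rw [map_smul, map_sum, Finset.sum_congr rfl hπS, Finset.sum_const,
      ← Nat.cast_smul_eq_nsmul ℚ, smul_smul, inv_mul_cancel₀ hcard, one_smul]
  · rw [mem_stabilizer_iff, smul_comm, Finset.smul_sum]
    congr 1
    exact Finset.sum_equiv (MulAction.toPerm u) (hUS u hu) fun _ _ => rfl

noncomputable def DiscGMod.permutation (Ω : Type u) [MulAction G Ω]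
    (hΩ : ∀ ω : Ω, IsOpen (stabilizer G ω : Set G)) : DiscGMod G :=
  letI : DistribMulAction G (Ω →₀ ℚ) := comapDistribMulAction
  { carrier := Ω →₀ ℚ
    cmm := ⟨fun _ q f => mapDomain_smul q f⟩
    discrete f := by
      refine Subgroup.isOpen_of_mem_nhds _ (g := 1) <| Filter.mem_of_superset
        ((Filter.biInter_finset_mem f.support).mpr fun ω _ => (hΩ ω).mem_nhds (one_mem _)) ?_
      intro g hg
      change mapDomain (g • ·) f = f
      rw [mapDomain_congr (g := id) fun ω hω => Set.mem_iInter₂.mp hg ω hω, mapDomain_id] }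

theorem projOverDiscrete_finsupp {Ω : Type u} [MulAction G Ω]
    (hΩ : ∀ ω : Ω, IsCompact (stabilizer G ω : Set G)) :
    ProjOverDiscrete G (Ω →₀ ℚ) fun g f => f.mapDomain (g • ·) := by
  intro A B π hπ hsurj φ hφ
  have hφ_single (g : G) (ω : Ω) : φ (single (g • ω) 1) = g • φ (single ω 1) := by
    simpa only [mapDomain_single] using hφ g (single ω 1)
  obtain ⟨F, hF, hπF⟩ := exists_equivariant_lift_of_stabilizer_le π hπ _ hφ_single fun ω =>
    exists_lift_stabilizer_le_of_isCompact B π hπ hsurj (hΩ ω) fun g (hg : g • ω = ω) => by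
      rw [mem_stabilizer_iff, ← hφ_single, hg]
  refine ⟨linearCombination ℚ F, linearCombination_mapDomain_smul F hF, ?_⟩
  ext ω
  simpa using congrFun hπF ω

theorem isOpen_isCompact_stabilizer_quotient {U : Subgroup G}
    (hU : IsOpen (U : Set G) ∧ IsCompact (U : Set G)) (x : G ⧸ U) :
    IsOpen (stabilizer G x : Set G) ∧ IsCompact (stabilizer G x : Set G) := by
  obtain ⟨g, rfl⟩ := QuotientGroup.mk_surjective x
  let conj : G ≃ₜ G := (Homeomorph.mulLeft g).trans (Homeomorph.mulRight g⁻¹)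
  have hconj : (stabilizer G (g : G ⧸ U) : Set G) = conj '' U := by
    rw [show (g : G ⧸ U) = g • ((1 : G) : G ⧸ U) by rw [Quotient.smul_mk, smul_eq_mul, mul_one],
      stabilizer_smul_eq_stabilizer_map_conj, stabilizer_quotient, Subgroup.coe_map]
    rfl
  rw [hconj]
  exact ⟨conj.isOpenMap _ hU.1, hU.2.image conj.continuous⟩

theorem exists_finsupp_surjection {K : Subgroup G} (hKo : IsOpen (K : Set G))
    (hKc : IsCompact (K : Set G)) (M : DiscGMod G) :
    ∃ (Ω : Type u) (_ : MulAction G Ω),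
      (∀ ω : Ω, IsOpen (stabilizer G ω : Set G) ∧ IsCompact (stabilizer G ω : Set G)) ∧
      ∃ p : (Ω →₀ ℚ) →ₗ[ℚ] M.carrier,
        (∀ (g : G) (f : Ω →₀ ℚ), p (f.mapDomain (g • ·)) = g • p f) ∧ Function.Surjective p := by
  let U (m : M.carrier) : Subgroup G := stabilizer G m ⊓ K
  have hU (m : M.carrier) : IsOpen (U m : Set G) ∧ IsCompact (U m : Set G) :=
    have hUo : IsOpen (U m : Set G) := (M.discrete m).inter hKo
    ⟨hUo, hKc.of_isClosed_subset ((U m).isClosed_of_isOpen hUo) inf_le_right⟩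
  let orbitMap (ω : Σ m, G ⧸ U m) : M.carrier :=
    ofQuotientStabilizer G ω.1 (Subgroup.quotientMapOfLE inf_le_left ω.2)
  have hOrbitMap (g : G) (ω : Σ m, G ⧸ U m) : orbitMap (g • ω) = g • orbitMap ω := by
    obtain ⟨m, x⟩ := ω
    obtain ⟨h, rfl⟩ := QuotientGroup.mk_surjective x
    simp [orbitMap, mul_smul]
  refine ⟨Σ m, G ⧸ U m, inferInstance, fun ⟨m, x⟩ => ?_, linearCombination ℚ orbitMap,
    linearCombination_mapDomain_smul orbitMap hOrbitMap, fun m => ⟨single ⟨m, (1 : G)⟩ 1, ?_⟩⟩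
  · rw [stabilizer_sigma_mk]
    exact isOpen_isCompact_stabilizer_quotient (hU m) x
  · simp [orbitMap]

end Discrete

/-- A discrete `ℚ[G]`-module `M` over a t.d.l.c. group `G` is
projective in the category of discrete `ℚ[G]`-modules if and only if it is a
direct summand of a permutation module `ℚ[Ω]` for some discrete left `G`-set `Ω`
with compact open stabilizers. -/
theorem projective_iff_summand_of_permutation_module (G : Type u) [Group G]
    [TopologicalSpace G] [IsTopologicalGroup G] [TotallyDisconnectedSpace G]
    [LocallyCompactSpace G] (M : DiscGMod G) :
    ProjOverDiscrete G M.carrier (fun g m => g • m) ↔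
      ∃ (Ω : Type u) (a : G → Ω → Ω),
        (∀ ω, a 1 ω = ω) ∧ (∀ g h ω, a (g * h) ω = a g (a h ω)) ∧
        (∀ ω : Ω, IsOpen {g : G | a g ω = ω} ∧ IsCompact {g : G | a g ω = ω}) ∧
        ∃ (i : M.carrier →ₗ[ℚ] (Ω →₀ ℚ)) (p : (Ω →₀ ℚ) →ₗ[ℚ] M.carrier),
          (∀ (g : G) (m : M.carrier), i (g • m) = Finsupp.mapDomain (a g) (i m)) ∧
          (∀ (g : G) (f : Ω →₀ ℚ), p (Finsupp.mapDomain (a g) f) = g • p f) ∧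
          p.comp i = LinearMap.id := by
  constructor
  · intro hM
    obtain ⟨K, hKo, hKc⟩ := exists_isOpen_isCompact_subgroup G
    obtain ⟨Ω, _, hΩ, p, hp, hsurj⟩ := exists_finsupp_surjection hKo hKc M
    obtain ⟨i, hi, hpi⟩ := hM M (DiscGMod.permutation Ω fun ω => (hΩ ω).1) p hp hsurj
      LinearMap.id fun _ _ => rfl
    exact ⟨Ω, (· • ·), one_smul G, mul_smul, hΩ, i, p, hi, hp, hpi⟩
  · rintro ⟨Ω, a, ha1, hamul, hΩ, i, p, hi, hp, hpi⟩
    let _ : MulAction G Ω := { smul := a, one_smul := ha1, mul_smul := hamul }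
    exact (projOverDiscrete_finsupp fun ω => (hΩ ω).2).of_retract i p hi hp hpi
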